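/- arXiv:1501.02389 — 5 statements merged into one kernel-verified Lean document; each statement's English description precedes it below -/
import Mathlib

section
/- (Sharp lower bound for the variance of unit-level effects) For binary potential outcomes, S_τ²/N ≥ |τ̄|(1 − |τ̄|)/(N−1), where τ̄ = (N₁₀ − N₀₁)/N is the average causal effect. -/
open Finset

noncomputable def ind (b : Bool) : ℝ := if b then 1 else 0

def cnt (N : ℕ) (Y1 Y0 : Fin N → Bool) (a b : Bool) : ℕ :=
  (Finset.univ.filter (fun i => Y1 i = a ∧ Y0 i = b)).card

noncomputable def tauUnit (N : ℕ) (Y1 Y0 : Fin N → Bool) (i : Fin N) : ℝ :=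
  ind (Y1 i) - ind (Y0 i)

noncomputable def tauBar (N : ℕ) (Y1 Y0 : Fin N → Bool) : ℝ :=
  (∑ i, tauUnit N Y1 Y0 i) / N

noncomputable def Stau2 (N : ℕ) (Y1 Y0 : Fin N → Bool) : ℝ :=
  (∑ i, (tauUnit N Y1 Y0 i - tauBar N Y1 Y0) ^ 2) / ((N : ℝ) - 1)

/-!
Each unit-level effect `τᵢ` lies in `{-1, 0, 1}`, so `τᵢ² = |τᵢ|`. Hence
`∑ (τᵢ - τ̄)² = ∑ |τᵢ| - N τ̄² ≥ |∑ τᵢ| - N τ̄² = N |τ̄| (1 - |τ̄|)`,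
and dividing by `N (N - 1)` gives the bound.
-/

open scoped BigOperators

namespace Finset

variable {ι : Type*}

theorem sum_sq_sub_expect (s : Finset ι) (f : ι → ℝ) :
    ∑ i ∈ s, (f i - 𝔼 j ∈ s, f j) ^ 2 = ∑ i ∈ s, f i ^ 2 - #s * (𝔼 j ∈ s, f j) ^ 2 := by
  set m := 𝔼 j ∈ s, f j
  have hsum : ∑ i ∈ s, f i = #s * m := (card_mul_expect s f).symm
  simp only [sub_sq, sum_add_distrib, sum_sub_distrib, sum_const, nsmul_eq_mul, ← sum_mul,
    ← mul_sum, hsum]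
  ring

/-- The hypothesis `f i ^ 2 = |f i|` says that `f` takes values in `{-1, 0, 1}`. -/
theorem card_mul_abs_expect_mul_le_sum_sq_sub_expect (s : Finset ι) (f : ι → ℝ)
    (hf : ∀ i ∈ s, f i ^ 2 = |f i|) :
    #s * (|𝔼 j ∈ s, f j| * (1 - |𝔼 j ∈ s, f j|)) ≤ ∑ i ∈ s, (f i - 𝔼 j ∈ s, f j) ^ 2 := by
  set m := 𝔼 j ∈ s, f j
  have habs : #s * |m| ≤ ∑ i ∈ s, |f i| := by
    calc (#s : ℝ) * |m| = |∑ i ∈ s, f i| := by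
          rw [← card_mul_expect, abs_mul, Nat.abs_cast]
      _ ≤ ∑ i ∈ s, |f i| := abs_sum_le_sum_abs f s
  rw [sum_sq_sub_expect, sum_congr rfl hf, ← sq_abs m]
  linarith

end Finset

theorem ind_sub_ind_sq (a b : Bool) : (ind a - ind b) ^ 2 = |ind a - ind b| := by
  cases a <;> cases b <;> norm_num [ind]

theorem tauBar_eq_expect (N : ℕ) (Y1 Y0 : Fin N → Bool) :
    tauBar N Y1 Y0 = 𝔼 i, tauUnit N Y1 Y0 i := by
  rw [Fintype.expect_eq_sum_div_card, Fintype.card_fin, tauBar]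

theorem sharp_lower_bound (N : ℕ) (hN : 2 ≤ N) (Y1 Y0 : Fin N → Bool) :
    Stau2 N Y1 Y0 / N ≥
      |tauBar N Y1 Y0| * (1 - |tauBar N Y1 Y0|) / ((N : ℝ) - 1) := by
  have hN2 : (2 : ℝ) ≤ N := by exact_mod_cast hN
  have hN1 : (0 : ℝ) < (N : ℝ) - 1 := by linarith
  have hN0 : (N : ℝ) ≠ 0 := (zero_lt_two.trans_le hN2).ne'
  have hdev := card_mul_abs_expect_mul_le_sum_sq_sub_expect univ (tauUnit N Y1 Y0)
    fun i _ ↦ ind_sub_ind_sq (Y1 i) (Y0 i)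
  rw [card_fin, ← tauBar_eq_expect] at hdev
  set b := |tauBar N Y1 Y0| * (1 - |tauBar N Y1 Y0|)
  calc b / ((N : ℝ) - 1) = N * b / ((N : ℝ) - 1) / N := by field_simp
    _ ≤ Stau2 N Y1 Y0 / N := by unfold Stau2; gcongr
end

section
/- For binary potential outcomes, equality S_τ²/N = |τ̄|(1 − |τ̄|)/(N−1) holds if and only if monotonicity holds, i.e., N₀₁ = 0 or N₁₀ = 0. -/
open Finset

/-!
With `A = N₁₀` and `B = N₀₁`, every unit effect lies in `{-1, 0, 1}`, so `∑ τᵢ = A - B`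
and `∑ τᵢ² = A + B`; hence `N (N - 1) S_τ² = N (A + B) - (A - B)²`, while `τ̄ = (A - B) / N`.
Clearing denominators, the claimed equality becomes `A + B = |A - B|`, i.e. `min A B = 0`.
-/

theorem Finset.sum_sub_mean_sq {ι K : Type*} [Field K] [CharZero K] (s : Finset ι)
    (f : ι → K) :
    ∑ i ∈ s, (f i - (∑ j ∈ s, f j) / #s) ^ 2 =
      ∑ i ∈ s, f i ^ 2 - (∑ i ∈ s, f i) ^ 2 / #s := by
  rcases s.eq_empty_or_nonempty with rfl | hs
  · simp
  have hcard : (#s : K) ≠ 0 := by exact_mod_cast hs.card_pos.ne'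
  simp only [sub_sq, sum_add_distrib, sum_sub_distrib, ← sum_mul, ← mul_sum, sum_const,
    nsmul_eq_mul]
  field_simp
  ring

theorem add_eq_abs_sub_iff {a b : ℝ} (ha : 0 ≤ a) (hb : 0 ≤ b) :
    a + b = |a - b| ↔ a = 0 ∨ b = 0 := by
  rw [← abs_of_nonneg (add_nonneg ha hb), abs_eq_abs, or_comm]
  exact or_congr (by constructor <;> intro <;> linarith) (by constructor <;> intro <;> linarith)

theorem variance_bound_eq_iff {a b n : ℝ} (hn : 1 < n) :
    (a + b - (a - b) ^ 2 / n) / (n - 1) / n = |a - b| / n * (1 - |a - b| / n) / (n - 1) ↔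
      a + b = |a - b| := by
  have hn0 : n ≠ 0 := by positivity
  have hn1 : n - 1 ≠ 0 := sub_ne_zero.mpr hn.ne'
  rw [← sq_abs (a - b)]
  field_simp
  rw [mul_sub, ← sq, sub_left_inj, mul_left_inj' hn0]

section PotentialOutcomes

variable {N : ℕ} (Y1 Y0 : Fin N → Bool)

theorem cnt_eq_sum (a b : Bool) :
    (cnt N Y1 Y0 a b : ℝ) = ∑ i, if Y1 i = a ∧ Y0 i = b then 1 else 0 := by
  rw [cnt, natCast_card_filter]

theorem tauUnit_eq (i : Fin N) :
    tauUnit N Y1 Y0 i =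
      (if Y1 i = true ∧ Y0 i = false then 1 else 0) -
        (if Y1 i = false ∧ Y0 i = true then 1 else 0) := by
  cases h1 : Y1 i <;> cases h0 : Y0 i <;> norm_num [tauUnit, ind, h1, h0]

theorem tauUnit_sq (i : Fin N) :
    tauUnit N Y1 Y0 i ^ 2 =
      (if Y1 i = true ∧ Y0 i = false then 1 else 0) +
        (if Y1 i = false ∧ Y0 i = true then 1 else 0) := by
  cases h1 : Y1 i <;> cases h0 : Y0 i <;> norm_num [tauUnit, ind, h1, h0]

theorem sum_tauUnit :
    ∑ i, tauUnit N Y1 Y0 i = cnt N Y1 Y0 true false - cnt N Y1 Y0 false true := by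
  simp only [tauUnit_eq, sum_sub_distrib, cnt_eq_sum]

theorem sum_tauUnit_sq :
    ∑ i, tauUnit N Y1 Y0 i ^ 2 = cnt N Y1 Y0 true false + cnt N Y1 Y0 false true := by
  simp only [tauUnit_sq, sum_add_distrib, cnt_eq_sum]

theorem tauBar_eq :
    tauBar N Y1 Y0 = (cnt N Y1 Y0 true false - cnt N Y1 Y0 false true : ℝ) / N := by
  rw [tauBar, sum_tauUnit]

theorem Stau2_eq :
    Stau2 N Y1 Y0 =
      ((cnt N Y1 Y0 true false + cnt N Y1 Y0 false true : ℝ) -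
        (cnt N Y1 Y0 true false - cnt N Y1 Y0 false true : ℝ) ^ 2 / N) / (N - 1) := by
  have h := sum_sub_mean_sq univ (tauUnit N Y1 Y0)
  rw [card_univ, Fintype.card_fin] at h
  rw [Stau2, tauBar, h, sum_tauUnit_sq, sum_tauUnit]

end PotentialOutcomes

theorem sharp_bound_equality_iff_monotone (N : ℕ) (hN : 2 ≤ N) (Y1 Y0 : Fin N → Bool) :
    Stau2 N Y1 Y0 / N =
      |tauBar N Y1 Y0| * (1 - |tauBar N Y1 Y0|) / ((N : ℝ) - 1) ↔
      (cnt N Y1 Y0 false true = 0 ∨ cnt N Y1 Y0 true false = 0) := by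
  have hN1 : (1 : ℝ) < N := by exact_mod_cast hN
  rw [Stau2_eq, tauBar_eq, abs_div, Nat.abs_cast, variance_bound_eq_iff hN1,
    add_eq_abs_sub_iff (Nat.cast_nonneg _) (Nat.cast_nonneg _), Nat.cast_eq_zero,
    Nat.cast_eq_zero, or_comm]
end

section
/- (Neyman 1923) In a completely randomized experiment, τ̂ = p̂₁ − p̂₀ is unbiased for τ̄ = p₁ − p₀, and Var(τ̂) = S₁²/N₁ + S₀²/N₀ − S_τ²/N. -/
open Finset

/-- The set of completely randomized assignments of `N1` of `N` units to treatment. -/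
def assignments (N N1 : ℕ) : Finset (Fin N → Bool) :=
  Finset.univ.filter (fun w => (Finset.univ.filter (fun i => w i = true)).card = N1)

/-- Expectation of `f` under the uniform distribution over completely
randomized assignments. -/
noncomputable def Eexp (N N1 : ℕ) (f : (Fin N → Bool) → ℝ) : ℝ :=
  (∑ w ∈ assignments N N1, f w) / (assignments N N1).card

/-!
Write `Wᵢ` for the treatment indicator of unit `i` and `p = N₁/N`. The estimation error is linear
in the centred indicators: `τ̂ - τ̄ = ∑ᵢ (Wᵢ - p) aᵢ` with `aᵢ = Yᵢ(1)/N₁ + Yᵢ(0)/N₀`. Counting the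
assignments that treat every unit of a set `t` gives `E ∏_{i ∈ t} Wᵢ = N₁^{(#t)} / N^{(#t)}`
(falling factorials), so `E Wᵢ = p` and `Cov(Wᵢ, Wⱼ) = -p(1-p)/(N-1)` for `i ≠ j`. Hence `τ̂` is
unbiased and `Var τ̂ = p(1-p)/(N-1) · (N ∑ aᵢ² - (∑ aᵢ)²) = p(1-p) N/(N-1) · ∑ (aᵢ - ā)²`; expressing
`aᵢ - ā` through the centred outcomes turns this into `S₁²/N₁ + S₀²/N₀ - S_τ²/N`.
-/

variable {N N1 : ℕ}

theorem card_filter_assignments_forall (t : Finset (Fin N)) (ht : #t ≤ N1) :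
    #{w ∈ assignments N N1 | ∀ i ∈ t, w i = true} = (N - #t).choose (N1 - #t) := by
  rw [show N - #t = #(univ : Finset (Fin N)) - #t by simp,
    ← card_filter_powersetCard_subset t univ N1 (subset_univ t) ht]
  exact card_nbij' (fun w => ({i | w i = true} : Finset (Fin N))) (fun s i => decide (i ∈ s))
    (fun w => by simp [assignments, subset_iff]) (fun s => by simp [assignments, subset_iff])
    (fun w _ => by funext i; simp) (fun s _ => by ext i; simp)

theorem card_assignments : #(assignments N N1) = N.choose N1 := by
  simpa using card_filter_assignments_forall (N := N) (N1 := N1) ∅ (Nat.zero_le _)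

theorem card_assignments_pos (h : N1 ≤ N) : 0 < #(assignments N N1) :=
  card_assignments (N := N) (N1 := N1) ▸ Nat.choose_pos h

-- Multiplied out so that it also covers `N1 < #t`, where both sides vanish.
theorem card_filter_assignments_forall_mul_descFactorial (t : Finset (Fin N)) :
    #{w ∈ assignments N N1 | ∀ i ∈ t, w i = true} * N.descFactorial #t
      = #(assignments N N1) * N1.descFactorial #t := by
  rcases le_or_gt #t N1 with ht | ht
  · rw [card_filter_assignments_forall t ht, card_assignments,
      Nat.descFactorial_eq_factorial_mul_choose, Nat.descFactorial_eq_factorial_mul_choose]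
    calc _ = (#t).factorial * (N.choose N1 * N1.choose #t) := by rw [Nat.choose_mul ht]; ring
      _ = _ := by ring
  · rw [Nat.descFactorial_of_lt ht, mul_zero, mul_eq_zero]
    left
    refine card_eq_zero.mpr (filter_eq_empty_iff.mpr fun w hw htrue => ht.not_ge ?_)
    rw [assignments, mem_filter] at hw
    exact hw.2 ▸ card_le_card fun i hi => by simpa using htrue i hi

theorem Eexp_add (f g : (Fin N → Bool) → ℝ) :
    Eexp N N1 (fun w => f w + g w) = Eexp N N1 f + Eexp N N1 g := by
  simp only [Eexp, sum_add_distrib, add_div]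

theorem Eexp_sub (f g : (Fin N → Bool) → ℝ) :
    Eexp N N1 (fun w => f w - g w) = Eexp N N1 f - Eexp N N1 g := by
  simp only [Eexp, sum_sub_distrib, sub_div]

theorem Eexp_const_mul (c : ℝ) (f : (Fin N → Bool) → ℝ) :
    Eexp N N1 (fun w => c * f w) = c * Eexp N N1 f := by
  simp only [Eexp, ← mul_sum, mul_div_assoc]

theorem Eexp_mul_const (c : ℝ) (f : (Fin N → Bool) → ℝ) :
    Eexp N N1 (fun w => f w * c) = Eexp N N1 f * c := by
  simp only [Eexp, ← sum_mul, mul_div_right_comm]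

theorem Eexp_sum {ι : Type*} (s : Finset ι) (f : ι → (Fin N → Bool) → ℝ) :
    Eexp N N1 (fun w => ∑ i ∈ s, f i w) = ∑ i ∈ s, Eexp N N1 (f i) := by
  simp only [Eexp, sum_comm (s := assignments N N1), sum_div]

theorem Eexp_const (h : N1 ≤ N) (c : ℝ) : Eexp N N1 (fun _ => c) = c := by
  have hC : (#(assignments N N1) : ℝ) ≠ 0 := by exact_mod_cast (card_assignments_pos h).ne'
  simp only [Eexp, sum_const, nsmul_eq_mul]
  field_simp

theorem Eexp_prod_ind (h : N1 ≤ N) (t : Finset (Fin N)) :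
    Eexp N N1 (fun w => ∏ i ∈ t, ind (w i)) = N1.descFactorial #t / N.descFactorial #t := by
  have hC : (#(assignments N N1) : ℝ) ≠ 0 := by exact_mod_cast (card_assignments_pos h).ne'
  have hD : (N.descFactorial #t : ℝ) ≠ 0 := by
    have : #t ≤ N := by simpa using card_le_univ t
    exact_mod_cast (Nat.descFactorial_pos.mpr this).ne'
  have hsum : ∑ w ∈ assignments N N1, ∏ i ∈ t, ind (w i)
      = #{w ∈ assignments N N1 | ∀ i ∈ t, w i = true} := by
    rw [card_filter, Nat.cast_sum]
    simp only [ind, prod_boole, Nat.cast_ite, Nat.cast_one, Nat.cast_zero]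
    congr!
  rw [Eexp, hsum, div_eq_div_iff hC hD]
  exact_mod_cast (card_filter_assignments_forall_mul_descFactorial t).trans (mul_comm _ _)

theorem Eexp_ind (h : N1 ≤ N) (i : Fin N) : Eexp N N1 (fun w => ind (w i)) = N1 / N := by
  simpa using Eexp_prod_ind h {i}

theorem Eexp_ind_mul_ind (h : N1 ≤ N) {i j : Fin N} (hij : i ≠ j) :
    Eexp N N1 (fun w => ind (w i) * ind (w j)) = N1 * (N1 - 1) / (N * (N - 1)) := by
  have := Eexp_prod_ind h {i, j}
  simp_rw [prod_pair hij, card_pair hij, Nat.cast_descFactorial_two] at this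
  exact this

-- `p(1-p)` on the diagonal and `-p(1-p)/(N-1)` off it, where `p = N1/N`.
theorem Eexp_centered_ind_mul_centered_ind (h : N1 ≤ N) (hN : 2 ≤ N) (i j : Fin N) :
    Eexp N N1 (fun w => (ind (w i) - N1 / N) * (ind (w j) - N1 / N))
      = N1 / N * (1 - N1 / N) / (N - 1) * (N * (if i = j then 1 else 0) - 1) := by
  have hN' : (N : ℝ) - 1 ≠ 0 := by
    have : (2 : ℝ) ≤ N := by exact_mod_cast hN
    linarith
  have hexpand : ∀ w : Fin N → Bool, (ind (w i) - N1 / N) * (ind (w j) - N1 / N)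
      = ind (w i) * ind (w j) - N1 / N * ind (w i) - N1 / N * ind (w j) + N1 / N * (N1 / N) :=
    fun w => by ring
  simp only [hexpand, Eexp_add, Eexp_sub, Eexp_const_mul, Eexp_const h, Eexp_ind h]
  split_ifs with hij
  · subst hij
    have hsq : ∀ b : Bool, ind b * ind b = ind b := fun b => by cases b <;> simp [ind]
    simp only [hsq, Eexp_ind h]
    field_simp
    ring
  · rw [Eexp_ind_mul_ind h hij]
    field_simp
    ring

theorem Eexp_sum_centered_ind_mul (h : N1 ≤ N) (a : Fin N → ℝ) :
    Eexp N N1 (fun w => ∑ i, (ind (w i) - N1 / N) * a i) = 0 := by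
  simp only [Eexp_sum, Eexp_mul_const, Eexp_sub, Eexp_ind h, Eexp_const h, sub_self, zero_mul,
    sum_const_zero]

theorem Eexp_sq_sum_centered_ind_mul (h : N1 ≤ N) (hN : 2 ≤ N) (a : Fin N → ℝ) :
    Eexp N N1 (fun w => (∑ i, (ind (w i) - N1 / N) * a i) ^ 2)
      = N1 / N * (1 - N1 / N) / (N - 1) * (N * ∑ i, a i ^ 2 - (∑ i, a i) ^ 2) := by
  have hexpand : ∀ w : Fin N → Bool, (∑ i, (ind (w i) - N1 / N) * a i) ^ 2
      = ∑ i, ∑ j, (a i * a j) * ((ind (w i) - N1 / N) * (ind (w j) - N1 / N)) := by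
    intro w
    rw [sq, sum_mul_sum]
    exact sum_congr rfl fun i _ => sum_congr rfl fun j _ => by ring
  simp only [hexpand, Eexp_sum, Eexp_const_mul, Eexp_centered_ind_mul_centered_ind h hN]
  simp only [mul_sub, mul_ite, mul_one, mul_zero, sum_sub_distrib, sum_ite_eq, mem_univ, if_true,
    sq, sum_mul_sum, ← sum_mul]
  ring

theorem card_mul_sum_sq_sub_sq_sum {ι : Type*} [Fintype ι] (x : ι → ℝ) :
    Fintype.card ι * ∑ i, x i ^ 2 - (∑ i, x i) ^ 2
      = Fintype.card ι * ∑ i, (x i - (∑ j, x j) / Fintype.card ι) ^ 2 := by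
  rcases isEmpty_or_nonempty ι with hι | hι
  · simp
  have hn : (Fintype.card ι : ℝ) ≠ 0 := by positivity
  simp only [sub_sq, sum_add_distrib, sum_sub_distrib, ← sum_mul, ← mul_sum, sum_const,
    card_univ, nsmul_eq_mul]
  field_simp
  ring

theorem diffInMeans_sub_eq {N0 : ℕ} (hN : N = N1 + N0) (hN1 : 1 ≤ N1) (hN0 : 1 ≤ N0)
    (w : Fin N → Bool) (Y1 Y0 : Fin N → ℝ) :
    (∑ i, ind (w i) * Y1 i) / N1 - (∑ i, (1 - ind (w i)) * Y0 i) / N0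
        - ((∑ i, Y1 i) / N - (∑ i, Y0 i) / N)
      = ∑ i, (ind (w i) - N1 / N) * (Y1 i / N1 + Y0 i / N0) := by
  have hN1' : (1 : ℝ) ≤ N1 := by exact_mod_cast hN1
  have hN0' : (1 : ℝ) ≤ N0 := by exact_mod_cast hN0
  have hNR : (N : ℝ) = N1 + N0 := by exact_mod_cast hN
  simp only [sum_div, ← sum_sub_distrib]
  refine sum_congr rfl fun i _ => ?_
  rw [hNR]
  field_simp
  ring

theorem neyman_variance_identity {N0 : ℕ} (hN : N = N1 + N0) (hN1 : 1 ≤ N1) (hN0 : 1 ≤ N0)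
    (Y1 Y0 : Fin N → ℝ) :
    N1 / N * (1 - N1 / N) / (N - 1)
        * (N * ∑ i, (Y1 i / N1 + Y0 i / N0) ^ 2 - (∑ i, (Y1 i / N1 + Y0 i / N0)) ^ 2)
      = (∑ i, (Y1 i - (∑ j, Y1 j) / N) ^ 2) / (N - 1) / N1
        + (∑ i, (Y0 i - (∑ j, Y0 j) / N) ^ 2) / (N - 1) / N0
        - (∑ i, ((Y1 i - Y0 i) - ((∑ j, Y1 j) / N - (∑ j, Y0 j) / N)) ^ 2) / (N - 1) / N := by
  set u : Fin N → ℝ := fun i => Y1 i - (∑ j, Y1 j) / N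
  set v : Fin N → ℝ := fun i => Y0 i - (∑ j, Y0 j) / N
  have hN1' : (1 : ℝ) ≤ N1 := by exact_mod_cast hN1
  have hN0' : (1 : ℝ) ≤ N0 := by exact_mod_cast hN0
  have hNR : (N : ℝ) = N1 + N0 := by exact_mod_cast hN
  have hcenter : ∀ i, Y1 i / N1 + Y0 i / N0 - (∑ j, (Y1 j / N1 + Y0 j / N0)) / N
      = u i / N1 + v i / N0 := fun i => by
    simp only [u, v, sum_add_distrib, ← sum_div]
    rw [hNR]
    field_simp
    ring
  have hspread := card_mul_sum_sq_sub_sq_sum fun i => Y1 i / N1 + Y0 i / N0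
  simp only [Fintype.card_fin, hcenter] at hspread
  have hsum_sq : ∑ i, (u i / N1 + v i / N0) ^ 2
      = (∑ i, u i ^ 2) / N1 ^ 2 + 2 * (∑ i, u i * v i) / (N1 * N0) + (∑ i, v i ^ 2) / N0 ^ 2 := by
    rw [← sum_congr rfl fun i _ => (show u i ^ 2 / N1 ^ 2 + 2 * (u i * v i) / (N1 * N0)
      + v i ^ 2 / N0 ^ 2 = _ by ring)]
    simp only [sum_add_distrib, ← sum_div, ← mul_sum]
  have hdiff_sq : ∑ i, ((Y1 i - Y0 i) - ((∑ j, Y1 j) / N - (∑ j, Y0 j) / N)) ^ 2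
      = ∑ i, u i ^ 2 - 2 * ∑ i, u i * v i + ∑ i, v i ^ 2 := by
    rw [← sum_congr rfl fun i _ => (show u i ^ 2 - 2 * (u i * v i) + v i ^ 2 = _ by ring)]
    simp only [sum_add_distrib, sum_sub_distrib, ← mul_sum]
  have hu : ∑ i, (Y1 i - (∑ j, Y1 j) / N) ^ 2 = ∑ i, u i ^ 2 := rfl
  have hv : ∑ i, (Y0 i - (∑ j, Y0 j) / N) ^ 2 = ∑ i, v i ^ 2 := rfl
  rw [hspread, hsum_sq, hdiff_sq, hu, hv, hNR]
  generalize ∑ i, u i ^ 2 = A, ∑ i, v i ^ 2 = B, ∑ i, u i * v i = C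
  have hNm1 : (N1 : ℝ) + N0 - 1 ≠ 0 := by linarith
  field_simp
  ring

theorem neyman_1923 (N N1 N0 : ℕ) (hN : N = N1 + N0) (hN1 : 1 ≤ N1) (hN0 : 1 ≤ N0)
    (hNge : 2 ≤ N) (Y1 Y0 : Fin N → ℝ)
    (p1 p0 S1sq S0sq Stau2 : ℝ)
    (hp1 : p1 = (∑ i, Y1 i) / N) (hp0 : p0 = (∑ i, Y0 i) / N)
    (hS1 : S1sq = (∑ i, (Y1 i - p1) ^ 2) / ((N : ℝ) - 1))
    (hS0 : S0sq = (∑ i, (Y0 i - p0) ^ 2) / ((N : ℝ) - 1))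
    (hStau : Stau2 = (∑ i, ((Y1 i - Y0 i) - (p1 - p0)) ^ 2) / ((N : ℝ) - 1))
    (tauhat : (Fin N → Bool) → ℝ)
    (htauhat : ∀ w, tauhat w =
      (∑ i, ind (w i) * Y1 i) / N1 - (∑ i, (1 - ind (w i)) * Y0 i) / N0) :
    Eexp N N1 tauhat = p1 - p0 ∧
    Eexp N N1 (fun w => (tauhat w - (p1 - p0)) ^ 2) =
      S1sq / N1 + S0sq / N0 - Stau2 / N := by
  have hle : N1 ≤ N := by omega
  have hdev : ∀ w, tauhat w - (p1 - p0)
      = ∑ i, (ind (w i) - N1 / N) * (Y1 i / N1 + Y0 i / N0) := fun w => by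
    rw [htauhat, hp1, hp0]
    exact diffInMeans_sub_eq hN hN1 hN0 w Y1 Y0
  constructor
  · have hmean := Eexp_sum_centered_ind_mul hle fun i => Y1 i / N1 + Y0 i / N0
    simp only [← hdev, Eexp_sub, Eexp_const hle] at hmean
    exact sub_eq_zero.mp hmean
  · simp only [hdev, Eexp_sq_sum_centered_ind_mul hle hNge]
    rw [hS1, hS0, hStau, hp1, hp0]
    exact neyman_variance_identity hN hN1 hN0 Y1 Y0
end

section
/- Neyman's variance estimator satisfies E[V̂_Neyman] − Var(τ̂) = S_τ²/N ≥ 0, i.e., V̂_Neyman = s₁²/N₁ + s₀²/N₀ is conservative, with equality if and only if all unit-level causal effects are equal. -/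
open Finset

/-!
By symmetry under permutations of the units, a completely randomized design treats each unit
with probability `N₁/N` and each pair of distinct units with probability
`N₁(N₁-1)/(N(N-1))`. These two moments give the mean and variance of every treated-group sum.
Since the control group is the treated group of the complementary design, they give the
unbiasedness of both sample variances, and, since `τ̂ - τ` is the treated-group sum of
`(Y₁ - p₁)/N₁ + (Y₀ - p₀)/N₀`, Neyman's formula `Var τ̂ = S₁²/N₁ + S₀²/N₀ - S_τ²/N`.
-/

open scoped BigOperators

lemma ind_mul_self (b : Bool) : ind b * ind b = ind b := by cases b <;> simp [ind]

lemma ind_not (b : Bool) : ind (!b) = 1 - ind b := by cases b <;> simp [ind]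

lemma sum_mul_sub_sq {ι : Type*} (s : Finset ι) (u f : ι → ℝ) (m : ℝ) :
    ∑ i ∈ s, u i * (f i - m) ^ 2 =
      ∑ i ∈ s, u i * f i ^ 2 - 2 * m * ∑ i ∈ s, u i * f i + m ^ 2 * ∑ i ∈ s, u i := by
  simp only [mul_sum, ← sum_sub_distrib, ← sum_add_distrib]
  exact sum_congr rfl fun i _ => by ring

section

variable {N N1 : ℕ}

lemma mem_assignments_iff_sum_ind {w : Fin N → Bool} :
    w ∈ assignments N N1 ↔ ∑ i, ind (w i) = N1 := by
  simp [assignments, ind, sum_boole]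

lemma assignments_nonempty (h : N1 ≤ N) : (assignments N N1).Nonempty := by
  obtain ⟨t, -, ht⟩ := exists_subset_card_eq (s := (univ : Finset (Fin N))) (by simpa using h)
  exact ⟨fun i => decide (i ∈ t), by simpa [assignments] using ht⟩

lemma Eexp_eq_expect (f : (Fin N → Bool) → ℝ) :
    Eexp N N1 f = 𝔼 w ∈ assignments N N1, f w :=
  (expect_eq_sum_div_card _ _).symm

lemma expect_assignments_comp_perm (σ : Equiv.Perm (Fin N)) (F : (Fin N → Bool) → ℝ) :
    𝔼 w ∈ assignments N N1, F (w ∘ σ) = 𝔼 w ∈ assignments N N1, F w :=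
  expect_equiv (σ.symm.arrowCongr (Equiv.refl Bool))
    (fun w => by simp [mem_assignments_iff_sum_ind, Equiv.sum_comp σ (fun i => ind (w i))])
    (fun w _ => rfl)

lemma expect_assignments_comp_not {N0 : ℕ} (hN : N = N1 + N0) (F : (Fin N → Bool) → ℝ) :
    𝔼 w ∈ assignments N N1, F (fun i => !w i) = 𝔼 w ∈ assignments N N0, F w := by
  refine expect_equiv ((Equiv.refl (Fin N)).arrowCongr Equiv.boolNot) (fun w => ?_) (fun w _ => rfl)
  have hNr : (N : ℝ) = N1 + N0 := by exact_mod_cast hN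
  have hsum : ∑ i, ind (!w i) = N - ∑ i, ind (w i) := by simp [ind_not]
  change w ∈ assignments N N1 ↔ (fun i => !w i) ∈ assignments N N0
  rw [mem_assignments_iff_sum_ind, mem_assignments_iff_sum_ind, hsum]
  constructor <;> intro h <;> linarith

lemma expect_ind (hN1 : N1 ≤ N) (i : Fin N) :
    𝔼 w ∈ assignments N N1, ind (w i) = N1 / N := by
  have hsymm : ∀ j, 𝔼 w ∈ assignments N N1, ind (w j) = 𝔼 w ∈ assignments N N1, ind (w i) :=
    fun j => by simpa using expect_assignments_comp_perm (Equiv.swap i j) (fun w => ind (w i))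
  have hN : (N : ℝ) ≠ 0 := by exact_mod_cast i.pos.ne'
  rw [eq_div_iff hN]
  calc (𝔼 w ∈ assignments N N1, ind (w i)) * N
      = ∑ j, 𝔼 w ∈ assignments N N1, ind (w j) := by simp [hsymm, mul_comm]
    _ = 𝔼 w ∈ assignments N N1, ∑ j, ind (w j) := (expect_sum_comm _ _ _).symm
    _ = N1 := by
      rw [expect_congr rfl (fun w hw => mem_assignments_iff_sum_ind.1 hw),
        expect_const (assignments_nonempty hN1)]

lemma expect_ind_mul_ind (hN1 : N1 ≤ N) {i j : Fin N} (hij : i ≠ j) :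
    𝔼 w ∈ assignments N N1, ind (w i) * ind (w j) = N1 * (N1 - 1) / (N * (N - 1)) := by
  have hsymm : ∀ k ∈ univ.erase i, 𝔼 w ∈ assignments N N1, ind (w i) * ind (w k) =
      𝔼 w ∈ assignments N N1, ind (w i) * ind (w j) := fun k hk => by
    have hik : Equiv.swap j k i = i := Equiv.swap_apply_of_ne_of_ne hij (ne_of_mem_erase hk).symm
    simpa [hik] using expect_assignments_comp_perm (Equiv.swap j k) (fun w => ind (w i) * ind (w j))
  have hN : 2 ≤ N := by have := Fin.val_ne_of_ne hij; omega
  have hN' : (N : ℝ) * (N - 1) ≠ 0 := by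
    have : (2 : ℝ) ≤ N := by exact_mod_cast hN
    nlinarith
  rw [eq_div_iff hN']
  calc (𝔼 w ∈ assignments N N1, ind (w i) * ind (w j)) * (N * (N - 1))
      = N * ∑ k ∈ univ.erase i, 𝔼 w ∈ assignments N N1, ind (w i) * ind (w k) := by
        rw [sum_congr rfl hsymm, sum_const, card_erase_of_mem (mem_univ i), card_univ,
          Fintype.card_fin, nsmul_eq_mul, Nat.cast_sub (by omega)]
        ring
    _ = N * 𝔼 w ∈ assignments N N1, ind (w i) * ∑ k ∈ univ.erase i, ind (w k) := by
        rw [← expect_sum_comm]; simp only [mul_sum]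
    _ = N * 𝔼 w ∈ assignments N N1, (N1 - 1) * ind (w i) := by
        congr 1
        refine expect_congr rfl fun w hw => ?_
        rw [sum_erase_eq_sub (mem_univ i), mem_assignments_iff_sum_ind.1 hw, mul_sub, ind_mul_self]
        ring
    _ = N1 * (N1 - 1) := by
        have : (N : ℝ) ≠ 0 := by exact_mod_cast (by omega : N ≠ 0)
        rw [← mul_expect, expect_ind hN1]
        field_simp

lemma expect_ind_mul_ind_eq (hN : 2 ≤ N) (hN1 : N1 ≤ N) (i j : Fin N) :
    𝔼 w ∈ assignments N N1, ind (w i) * ind (w j) =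
      N1 * (N1 - 1) / (N * (N - 1)) + if i = j then (N1 * (N - N1) / (N * (N - 1)) : ℝ) else 0 := by
  split_ifs with hij
  · have : (2 : ℝ) ≤ N := by exact_mod_cast hN
    have : (N : ℝ) - 1 ≠ 0 := by linarith
    simp only [hij, ind_mul_self, expect_ind hN1]
    field_simp
    ring
  · rw [expect_ind_mul_ind hN1 hij, add_zero]

noncomputable def treatedSum (w : Fin N → Bool) (f : Fin N → ℝ) : ℝ := ∑ i, ind (w i) * f i

lemma treatedSum_not (w : Fin N → Bool) (f : Fin N → ℝ) :
    treatedSum (fun i => !w i) f = ∑ i, f i - treatedSum w f := by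
  simp only [treatedSum, ind_not, sub_mul, one_mul, sum_sub_distrib]

lemma expect_treatedSum (hN1 : N1 ≤ N) (f : Fin N → ℝ) :
    𝔼 w ∈ assignments N N1, treatedSum w f = N1 / N * ∑ i, f i := by
  simp only [treatedSum, expect_sum_comm, ← expect_mul, expect_ind hN1, mul_sum]

lemma expect_treatedSum_sq (hN : 2 ≤ N) (hN1 : N1 ≤ N) (f : Fin N → ℝ) :
    𝔼 w ∈ assignments N N1, treatedSum w f ^ 2 =
      (N1 * (N - N1) * ∑ i, f i ^ 2 + N1 * (N1 - 1) * (∑ i, f i) ^ 2) / (N * (N - 1)) := by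
  have hsq : ∀ w : Fin N → Bool,
      treatedSum w f ^ 2 = ∑ i, ∑ j, f i * f j * (ind (w i) * ind (w j)) := fun w => by
    simp only [treatedSum, sq, sum_mul_sum]
    refine sum_congr rfl fun i _ => sum_congr rfl fun j _ => ?_
    ring
  simp only [hsq, expect_sum_comm, ← mul_expect, expect_ind_mul_ind_eq hN hN1, mul_add, mul_ite,
    mul_zero, sum_add_distrib, sum_ite_eq, mem_univ, if_true, ← sum_mul, ← sum_mul_sum, ← sq]
  ring

noncomputable def populationMean (f : Fin N → ℝ) : ℝ := (∑ i, f i) / N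

noncomputable def populationVariance (f : Fin N → ℝ) : ℝ :=
  (∑ i, (f i - populationMean f) ^ 2) / (N - 1)

lemma populationVariance_nonneg (f : Fin N → ℝ) : 0 ≤ populationVariance f := by
  rcases N with _ | N
  · simp [populationVariance]
  · exact div_nonneg (sum_nonneg fun i _ => sq_nonneg _) (by simp)

lemma populationVariance_eq_zero_iff (f : Fin N → ℝ) :
    populationVariance f = 0 ↔ ∀ i j, f i = f j := by
  rcases lt_or_ge N 2 with hN | hN
  · interval_cases N <;> simp [populationVariance]
  have hN' : (N : ℝ) - 1 ≠ 0 := by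
    have : (2 : ℝ) ≤ N := by exact_mod_cast hN
    linarith
  rw [populationVariance, div_eq_zero_iff, or_iff_left hN',
    sum_eq_zero_iff_of_nonneg fun _ _ => sq_nonneg _]
  simp only [mem_univ, true_implies, pow_eq_zero_iff two_ne_zero, sub_eq_zero]
  refine ⟨fun h i j => (h i).trans (h j).symm, fun h i => ?_⟩
  have : (N : ℝ) ≠ 0 := by exact_mod_cast (by omega : N ≠ 0)
  simp [populationMean, ← h i, this]

noncomputable def sampleVariance (w : Fin N → Bool) (n : ℕ) (f : Fin N → ℝ) : ℝ :=
  (∑ i, ind (w i) * (f i - treatedSum w f / n) ^ 2) / (n - 1)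

lemma sampleVariance_eq {w : Fin N → Bool} (hw : w ∈ assignments N N1) (f : Fin N → ℝ) :
    sampleVariance w N1 f =
      (treatedSum w (fun i => f i ^ 2) - treatedSum w f ^ 2 / N1) / (N1 - 1) := by
  rw [sampleVariance, sum_mul_sub_sq, mem_assignments_iff_sum_ind.1 hw]
  rcases eq_or_ne (N1 : ℝ) 0 with h | h
  · simp [h, treatedSum]
  · field_simp
    simp only [treatedSum]
    ring

lemma expect_sampleVariance (hn : 2 ≤ N1) (hN1 : N1 ≤ N) (f : Fin N → ℝ) :
    𝔼 w ∈ assignments N N1, sampleVariance w N1 f = populationVariance f := by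
  have hN : 2 ≤ N := by omega
  have hpop : ∑ i, (f i - populationMean f) ^ 2 =
      ∑ i, f i ^ 2 - 2 * populationMean f * ∑ i, f i + populationMean f ^ 2 * N := by
    simpa using sum_mul_sub_sq univ (fun _ => 1) f (populationMean f)
  have : (2 : ℝ) ≤ N1 := by exact_mod_cast hn
  have : (2 : ℝ) ≤ N := by exact_mod_cast hN
  have : (N1 : ℝ) - 1 ≠ 0 := by linarith
  have : (N : ℝ) - 1 ≠ 0 := by linarith
  rw [expect_congr rfl fun w hw => sampleVariance_eq hw f, ← expect_div, expect_sub_distrib,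
    ← expect_div, expect_treatedSum hN1, expect_treatedSum_sq hN hN1, populationVariance, hpop,
    populationMean]
  field_simp
  ring

noncomputable def diffInMeans (N1 N0 : ℕ) (Y1 Y0 : Fin N → ℝ) (w : Fin N → Bool) : ℝ :=
  treatedSum w Y1 / N1 - treatedSum (fun i => !w i) Y0 / N0

lemma diffInMeans_sub_eq_treatedSum {N0 : ℕ} (hN : N = N1 + N0) (hN1 : 1 ≤ N1) (hN0 : 1 ≤ N0)
    (Y1 Y0 : Fin N → ℝ) {w : Fin N → Bool} (hw : w ∈ assignments N N1) :
    diffInMeans N1 N0 Y1 Y0 w - (populationMean Y1 - populationMean Y0) =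
      treatedSum w fun i => (Y1 i - populationMean Y1) / N1 + (Y0 i - populationMean Y0) / N0 := by
  have hNr : (N : ℝ) = N1 + N0 := by exact_mod_cast hN
  have hn : (N : ℝ) ≠ 0 := Nat.cast_ne_zero.2 (by omega)
  rw [diffInMeans, treatedSum_not]
  simp only [treatedSum, mul_add, mul_div_assoc', mul_sub, sum_add_distrib, sum_sub_distrib,
    ← sum_div, ← sum_mul, mem_assignments_iff_sum_ind.1 hw, populationMean]
  field_simp
  rw [hNr]
  ring

lemma expect_sq_diffInMeans_sub {N0 : ℕ} (hN : N = N1 + N0) (hN1 : 1 ≤ N1) (hN0 : 1 ≤ N0)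
    (Y1 Y0 : Fin N → ℝ) :
    𝔼 w ∈ assignments N N1,
        (diffInMeans N1 N0 Y1 Y0 w - (populationMean Y1 - populationMean Y0)) ^ 2 =
      populationVariance Y1 / N1 + populationVariance Y0 / N0 -
        populationVariance (fun i => Y1 i - Y0 i) / N := by
  rw [expect_congr rfl fun w hw => by rw [diffInMeans_sub_eq_treatedSum hN hN1 hN0 Y1 Y0 hw]]
  set c : Fin N → ℝ := fun i => (Y1 i - populationMean Y1) / N1 + (Y0 i - populationMean Y0) / N0
  rw [expect_treatedSum_sq (by omega) (by omega)]
  have hNr : (N : ℝ) = N1 + N0 := by exact_mod_cast hN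
  have hn : (N : ℝ) ≠ 0 := Nat.cast_ne_zero.2 (by omega)
  have hc0 : ∑ i, c i = 0 := by
    simp only [c, sum_add_distrib, ← sum_div, sum_sub_distrib, sum_const, card_univ,
      Fintype.card_fin, nsmul_eq_mul, populationMean]
    field_simp
    ring
  have hmean : populationMean (fun i => Y1 i - Y0 i) = populationMean Y1 - populationMean Y0 := by
    simp only [populationMean, sum_sub_distrib, sub_div]
  have key : ∀ i, N1 * N0 * c i ^ 2 / N =
      (Y1 i - populationMean Y1) ^ 2 / N1 + (Y0 i - populationMean Y0) ^ 2 / N0 -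
        (Y1 i - Y0 i - (populationMean Y1 - populationMean Y0)) ^ 2 / N := by
    intro i
    simp only [c]
    field_simp
    rw [hNr]
    ring
  rw [hc0]
  calc _ = (∑ i, N1 * N0 * c i ^ 2 / N) / (N - 1) := by
        rw [← sum_div, ← mul_sum, hNr]
        field_simp
        ring
    _ = _ := by
        simp only [key, sum_add_distrib, sum_sub_distrib, ← sum_div, populationVariance, hmean]
        ring

end

theorem neyman_variance_estimator_conservative (N N1 N0 : ℕ) (hN : N = N1 + N0)
    (hN1 : 2 ≤ N1) (hN0 : 2 ≤ N0) (Y1 Y0 : Fin N → ℝ)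
    (p1 p0 S1sq S0sq Stau2 : ℝ)
    (hp1 : p1 = (∑ i, Y1 i) / N) (hp0 : p0 = (∑ i, Y0 i) / N)
    (hS1 : S1sq = (∑ i, (Y1 i - p1) ^ 2) / ((N : ℝ) - 1))
    (hS0 : S0sq = (∑ i, (Y0 i - p0) ^ 2) / ((N : ℝ) - 1))
    (hStau : Stau2 = (∑ i, ((Y1 i - Y0 i) - (p1 - p0)) ^ 2) / ((N : ℝ) - 1))
    (tauhat Vhat : (Fin N → Bool) → ℝ)
    (htauhat : ∀ w, tauhat w =
      (∑ i, ind (w i) * Y1 i) / N1 - (∑ i, (1 - ind (w i)) * Y0 i) / N0)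
    (hVhat : ∀ w, Vhat w =
      ((∑ i, ind (w i) * (Y1 i - (∑ j, ind (w j) * Y1 j) / N1) ^ 2) / ((N1 : ℝ) - 1)) / N1 +
      ((∑ i, (1 - ind (w i)) * (Y0 i - (∑ j, (1 - ind (w j)) * Y0 j) / N0) ^ 2) /
        ((N0 : ℝ) - 1)) / N0) :
    Eexp N N1 Vhat - Eexp N N1 (fun w => (tauhat w - (p1 - p0)) ^ 2) = Stau2 / N ∧
    0 ≤ Stau2 / N ∧
    (Eexp N N1 Vhat = Eexp N N1 (fun w => (tauhat w - (p1 - p0)) ^ 2) ↔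
      ∀ i j, Y1 i - Y0 i = Y1 j - Y0 j) := by
  have hS1' : S1sq = populationVariance Y1 := by rw [hS1, hp1]; rfl
  have hS0' : S0sq = populationVariance Y0 := by rw [hS0, hp0]; rfl
  have hStau' : Stau2 = populationVariance (fun i => Y1 i - Y0 i) := by
    rw [hStau, hp1, hp0, populationVariance, populationMean, sum_sub_distrib, sub_div]
  have hEV : Eexp N N1 Vhat = S1sq / N1 + S0sq / N0 := by
    have hV : ∀ w, Vhat w =
        sampleVariance w N1 Y1 / N1 + sampleVariance (fun i => !w i) N0 Y0 / N0 := fun w => by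
      simp only [hVhat, sampleVariance, treatedSum, ind_not]
    simp only [Eexp_eq_expect, hV, expect_add_distrib, ← expect_div]
    rw [expect_assignments_comp_not hN (fun w => sampleVariance w N0 Y0),
      expect_sampleVariance hN1 (by omega), expect_sampleVariance hN0 (by omega), hS1', hS0']
  have hEτ : Eexp N N1 (fun w => (tauhat w - (p1 - p0)) ^ 2) =
      S1sq / N1 + S0sq / N0 - Stau2 / N := by
    have htau : ∀ w, tauhat w = diffInMeans N1 N0 Y1 Y0 w := fun w => by
      simp only [htauhat, diffInMeans, treatedSum, ind_not]
    simp only [Eexp_eq_expect, htau]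
    rw [hS1', hS0', hStau', hp1, hp0]
    exact expect_sq_diffInMeans_sub hN (by omega) (by omega) Y1 Y0
  have hmain : Eexp N N1 Vhat - Eexp N N1 (fun w => (tauhat w - (p1 - p0)) ^ 2) = Stau2 / N := by
    rw [hEV, hEτ]; ring
  have hN_ne : (N : ℝ) ≠ 0 := Nat.cast_ne_zero.2 (by omega)
  refine ⟨hmain, div_nonneg (hStau' ▸ populationVariance_nonneg _) (Nat.cast_nonneg N), ?_⟩
  rw [← sub_eq_zero, hmain, div_eq_zero_iff, or_iff_left hN_ne, hStau',
    populationVariance_eq_zero_iff]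
end

section
/- The cell probabilities defined by π₁₁ = γπ₁₊π₊₁/(1 − π₊₁ + γπ₊₁) etc. are all in [0,1] if and only if γ(π₁₊ − π₊₁) ≤ 1 − π₊₁ and γπ₊₁ > π₁₊ + π₊₁ − 1. -/
/-! With `D = 1 - π₊₁ + γπ₊₁ > 0`, the two constrained cells factor as
`π₀₁ = π₊₁ ((1 - π₊₁) - γ(π₁₊ - π₊₁)) / D` and `π₀₀ = (1 - π₊₁)(γπ₊₁ - (π₁₊ + π₊₁ - 1)) / D`,
so their signs are those of the second factors. The cells `π₁₁` and `π₁₀` are nonnegative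
and add up to the margin `π₁₊ ≤ 1`, so both lie in `[0, 1]`. -/

section CellProbabilities

variable {γ a p : ℝ}

lemma one_sub_add_mul_pos (hγ : 0 < γ) (hp0 : 0 ≤ p) (hp1 : p ≤ 1) : 0 < 1 - p + γ * p := by
  rcases hp0.eq_or_lt with rfl | hp0
  · norm_num
  · nlinarith

lemma sub_mul_div_odds_eq (hD : 1 - p + γ * p ≠ 0) :
    p - γ * a * p / (1 - p + γ * p) = p * ((1 - p) - γ * (a - p)) / (1 - p + γ * p) := by
  rw [eq_div_iff hD, sub_mul, div_mul_cancel₀ _ hD]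
  ring

lemma one_sub_sub_add_mul_div_odds_eq (hD : 1 - p + γ * p ≠ 0) :
    1 - a - p + γ * a * p / (1 - p + γ * p)
      = (1 - p) * (γ * p - (a + p - 1)) / (1 - p + γ * p) := by
  rw [eq_div_iff hD, add_mul, div_mul_cancel₀ _ hD]
  ring

lemma mul_div_odds_add_mul_div_odds (hD : 1 - p + γ * p ≠ 0) :
    γ * a * p / (1 - p + γ * p) + a * (1 - p) / (1 - p + γ * p) = a := by
  field_simp
  ring

end CellProbabilities

lemma mul_div_nonneg_iff {c x D : ℝ} (hc : 0 < c) (hD : 0 < D) : 0 ≤ c * x / D ↔ 0 ≤ x := by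
  rw [le_div_iff₀ hD, zero_mul, mul_nonneg_iff_of_pos_left hc]

lemma mul_div_pos_iff {c x D : ℝ} (hc : 0 < c) (hD : 0 < D) : 0 < c * x / D ↔ 0 < x := by
  rw [div_pos_iff_of_pos_right hD, mul_pos_iff_of_pos_left hc]

theorem cell_probability_restrictions (γ pi1p pip1 : ℝ) (hγ : 0 < γ)
    (h1p : pi1p ∈ Set.Icc (0 : ℝ) 1) (hp1 : pip1 ∈ Set.Ioo (0 : ℝ) 1)
    (pi11 pi10 pi01 pi00 : ℝ)
    (h11 : pi11 = γ * pi1p * pip1 / (1 - pip1 + γ * pip1))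
    (h10 : pi10 = pi1p * (1 - pip1) / (1 - pip1 + γ * pip1))
    (h01 : pi01 = pip1 - pi11)
    (h00 : pi00 = 1 - pi1p - pip1 + pi11) :
    (0 ≤ pi01 ↔ γ * (pi1p - pip1) ≤ 1 - pip1) ∧
    (0 < pi00 ↔ pi1p + pip1 - 1 < γ * pip1) ∧
    pi11 ∈ Set.Icc (0 : ℝ) 1 ∧ pi10 ∈ Set.Icc (0 : ℝ) 1 := by
  obtain ⟨ha0, ha1⟩ := h1p
  obtain ⟨hp0, hp1⟩ := hp1
  have hD := one_sub_add_mul_pos hγ hp0.le hp1.le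
  have h11_nonneg : 0 ≤ pi11 := h11 ▸ by positivity
  have h10_nonneg : 0 ≤ pi10 := h10 ▸ div_nonneg (mul_nonneg ha0 (sub_nonneg.2 hp1.le)) hD.le
  have h_margin : pi11 + pi10 = pi1p := h11 ▸ h10 ▸ mul_div_odds_add_mul_div_odds hD.ne'
  refine ⟨?_, ?_, ⟨h11_nonneg, by linarith⟩, h10_nonneg, by linarith⟩
  · rw [h01, h11, sub_mul_div_odds_eq hD.ne', mul_div_nonneg_iff hp0 hD, sub_nonneg]
  · rw [h00, h11, one_sub_sub_add_mul_div_odds_eq hD.ne', mul_div_pos_iff (sub_pos.2 hp1) hD,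
      sub_pos]
end
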